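/- Let a be a real number and z a nonzero real number. If C : ℝ → ℝ is differentiable, C(0) = −1, and C(x) = z·e^x·(a·C(x) + C′(x)) for all real x, then C(x) = −exp(1/z − a·x − (1/z)·e^{−x}) for all real x. -/

import Mathlib

/-! Dividing the equation by `z eˣ` turns it into the linear equation `C' = (-a + e⁻ˣ / z) C`,
whose solutions are the multiples of `exp (1 / z - a x - e⁻ˣ / z)`; that exponent vanishes at
`0`, so `C 0 = -1` fixes the multiple. -/

open Real

theorem eq_mul_exp_sub_of_deriv_eq_mul {C F F' : ℝ → ℝ} (hC : Differentiable ℝ C)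
    (hF : ∀ x, HasDerivAt F (F' x) x) (hder : ∀ x, deriv C x = F' x * C x) (x x₀ : ℝ) :
    C x = C x₀ * exp (F x - F x₀) := by
  have hG : ∀ y, HasDerivAt (fun y => C y * exp (-F y)) 0 y := fun y => by
    refine ((hC y).hasDerivAt.mul (hF y).neg.exp).congr_deriv ?_
    rw [hder y]
    ring
  have hconst := is_const_of_deriv_eq_zero (fun y => (hG y).differentiableAt)
    (fun y => (hG y).deriv) x x₀
  calc C x = C x * exp (-F x) * exp (F x) := by rw [mul_assoc, ← exp_add, neg_add_cancel,
        exp_zero, mul_one]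
    _ = C x₀ * exp (F x - F x₀) := by rw [hconst, mul_assoc, ← exp_add, neg_add_eq_sub]

theorem hasDerivAt_const_sub_mul_sub_mul_exp_neg (b a c x : ℝ) :
    HasDerivAt (fun x => b - a * x - c * exp (-x)) (-a + c * exp (-x)) x := by
  refine ((((hasDerivAt_id x).const_mul a).const_sub b).sub
    ((hasDerivAt_neg x).exp.const_mul c)).congr_deriv ?_
  ring

theorem stmt_9 (a z : ℝ) (hz : z ≠ 0) (C : ℝ → ℝ) (hC : Differentiable ℝ C) (h0 : C 0 = -1)
    (hode : ∀ x : ℝ, C x = z * Real.exp x * (a * C x + deriv C x)) :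
    ∀ x : ℝ, C x = -Real.exp (1 / z - a * x - (1 / z) * Real.exp (-x)) := by
  have hder : ∀ x, deriv C x = (-a + 1 / z * exp (-x)) * C x := fun x => by
    have hx := hode x
    rw [exp_neg]
    field_simp
    linarith
  intro x
  rw [eq_mul_exp_sub_of_deriv_eq_mul hC
    (hasDerivAt_const_sub_mul_sub_mul_exp_neg (1 / z) a (1 / z)) hder x 0, h0]
  simp
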